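/- Consider a Boolean network with direct-measurement outputs via an injective obs : Fin p → Fin n, and let i_0, i_1, …, i_q be an observed path with i_q = obs j for some j : Fin p. Then for every d with d ≤ q and all initial states x, x' : Fin n → Bool, if G (F^[d] x) j = G (F^[d] x') j then x (i_{q-d}) = x' (i_{q-d}); that is, the reading of sensor j at time d recovers the initial value of the state variable at distance d from the end of the observed path. -/
import Mathlib


/-- Variable `k` is functional for the Boolean function `f`. -/
def Functional {n : ℕ} (f : (Fin n → Bool) → Bool) (k : Fin n) : Prop :=
  ∃ x : Fin n → Bool, f (Function.update x k (!(x k))) ≠ f x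

/-- The dependency set of `f`: the set of its functional variables. -/
def DepSet {n : ℕ} (f : (Fin n → Bool) → Bool) : Set (Fin n) :=
  {k | Functional f k}

lemma not_functional_update {n : ℕ} (f : (Fin n → Bool) → Bool) (i : Fin n)
    (h : ¬ Functional f i) (x : Fin n → Bool) (b : Bool) :
    f (Function.update x i b) = f x := by
  simp only [Functional, not_exists, not_not, ne_eq] at h
  rcases eq_or_ne b (x i) with hb | hb
  · rw [hb, Function.update_eq_self]
  · have : b = !(x i) := by revert hb; cases b <;> cases x i <;> simp
    rw [this]; exact h x

lemma eq_of_eq_on_dep {n : ℕ} (f : (Fin n → Bool) → Bool) (x x' : Fin n → Bool)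
    (h : ∀ i, Functional f i → x i = x' i) : f x = f x' := by
  suffices H : ∀ t : Finset (Fin n), f (fun i => if i ∈ t then x' i else x i) = f x by
    have := H Finset.univ
    simpa using this.symm
  intro t
  induction t using Finset.induction with
  | empty => simp
  | @insert a t _ ih =>
    rename_i ha
    have key : (fun i => if i ∈ insert a t then x' i else x i)
        = Function.update (fun i => if i ∈ t then x' i else x i) a (x' a) := by
      funext i
      rcases eq_or_ne i a with rfl | hi
      · simp [Function.update, ha]
      · simp [Function.update, hi, Finset.mem_insert]
    rw [key]
    by_cases hfa : Functional f a
    · have hxa : x' a = (fun i => if i ∈ t then x' i else x i) a := by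
        simp [ha, (h a hfa).symm]
      rw [hxa, Function.update_eq_self]
      exact ih
    · rw [not_functional_update f a hfa]
      exact ih

lemma depset_singleton_inj {n : ℕ} (f : (Fin n → Bool) → Bool) (k : Fin n)
    (h : DepSet f = {k}) (x x' : Fin n → Bool) (hf : f x = f x') : x k = x' k := by
  by_contra hne
  have hk : Functional f k := by
    have : k ∈ DepSet f := by rw [h]; exact rfl
    exact this
  obtain ⟨y, hy⟩ := hk
  have honly : ∀ i, Functional f i → i = k := by
    intro i hi
    have : i ∈ DepSet f := hi
    rw [h] at this; exact this
  have h1 : f x = f (Function.update y k (x k)) := by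
    apply eq_of_eq_on_dep
    intro i hi
    have := honly i hi; subst this
    simp [Function.update]
  have h2 : f x' = f (Function.update y k (x' k)) := by
    apply eq_of_eq_on_dep
    intro i hi
    have := honly i hi; subst this
    simp [Function.update]
  have hflip : x' k = !(x k) := by revert hne; cases x k <;> cases x' k <;> simp
  rcases eq_or_ne (x k) (y k) with h3 | h3
  · apply hy
    have e1 : f x = f y := by rw [h1, h3, Function.update_eq_self]
    have e2 : f x' = f (Function.update y k (!(y k))) := by rw [h2, hflip, h3]
    rw [← e2, ← hf, e1]
  · have h3' : x' k = y k := by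
      revert h3 hflip; cases x k <;> cases x' k <;> cases y k <;> simp
    have hx : x k = !(y k) := by
      revert h3; cases x k <;> cases y k <;> simp
    apply hy
    have e1 : f x = f (Function.update y k (!(y k))) := by rw [h1, hx]
    have e2 : f x' = f y := by rw [h2, h3', Function.update_eq_self]
    rw [← e1, hf, e2]


/-- Along an observed path `i_0, …, i_q` ending at the directly observable vertex
`i_q = obs j`, the reading of sensor `j` at time `d ≤ q` recovers the initial value
of the state variable `i_{q-d}` at distance `d` from the end of the path. -/
theorem observed_path_recovers_initial_value (n p q : ℕ)
    (F : (Fin n → Bool) → (Fin n → Bool)) (G : (Fin n → Bool) → (Fin p → Bool))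
    (obs : Fin p → Fin n) (hobs : Function.Injective obs)
    (hG : ∀ (x : Fin n → Bool) (j : Fin p), G x j = x (obs j))
    (path : ℕ → Fin n)
    -- the vertices `i_0, …, i_q` are pairwise distinct
    (hinj : ∀ a b : ℕ, a ≤ q → b ≤ q → path a = path b → a = b)
    (j : Fin p)
    -- `i_q` is directly observable, namely `i_q = obs j`
    (hlast : path q = obs j)
    -- no `i_k` with `k < q` is directly observable
    (hnotobs : ∀ k : ℕ, k < q → path k ∉ Set.range obs)
    -- for every `k < q`, the dependency set of `f_{i_{k+1}}` is exactly `{i_k}`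
    (hdep : ∀ k : ℕ, k < q → DepSet (fun x => F x (path (k + 1))) = {path k}) :
    ∀ d : ℕ, d ≤ q → ∀ x x' : Fin n → Bool,
      G (F^[d] x) j = G (F^[d] x') j → x (path (q - d)) = x' (path (q - d)) := by
  intro d
  induction d with
  | zero =>
    intro _ x x' h
    simpa [hG, hlast] using h
  | succ d ih =>
    intro hd x x' h
    have hd' : d ≤ q := Nat.le_of_succ_le hd
    have h1 : F x (path (q - d)) = F x' (path (q - d)) :=
      ih hd' (F x) (F x') (by simpa [Function.iterate_succ_apply] using h)
    have hk : q - d = (q - (d + 1)) + 1 := by omega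
    have hds := hdep (q - (d + 1)) (by omega)
    apply depset_singleton_inj _ _ hds
    rw [hk] at h1
    exact h1
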